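/- arXiv:0905.0040 — 2 statements merged into one kernel-verified Lean document; each statement's English description precedes it below -/
import Mathlib

section
/- In the Lie algebra of the previous context, the fundamental 2-form F = e¹∧Je¹ + e²∧Je² + e³∧Je³ satisfies d(F²) = 0, i.e. the associated invariant Hermitian metric is balanced. -/
/-!
Two-forms are central in the exterior algebra and `d` satisfies the untwisted Leibniz rule
against them, so `d(F²) = 2 F ∧ dF` with `dF = -e³ ∧ (e¹∧Je¹ - e²∧Je²)`. In `F ∧ e³` the term
`e³∧Je³` dies, leaving `e³ ∧ (ω₁ + ω₂) ∧ (ω₁ - ω₂) = e³ ∧ (ω₁² - ω₂²) = 0` for the decomposable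
forms `ω₁ = e¹∧Je¹`, `ω₂ = e²∧Je²`.
-/

namespace ExteriorAlgebra

variable {R M : Type*} [CommRing R] [AddCommGroup M] [Module R M]

theorem ι_mul_ι_anticomm (a b : M) : ι R a * ι R b = -(ι R b * ι R a) :=
  eq_neg_of_add_eq_zero_left (ι_add_mul_swap a b)

theorem commute_ι_mul_ι_ι (a b c : M) : Commute (ι R a * ι R b) (ι R c) := by
  rw [Commute, SemiconjBy, mul_assoc, ι_mul_ι_anticomm b c, mul_neg, ← mul_assoc,
    ι_mul_ι_anticomm a c, neg_mul, neg_neg, mul_assoc]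

theorem ι_mul_ι_mul_self (a b : M) : ι R a * ι R b * (ι R a * ι R b) = 0 := by
  rw [← mul_assoc, (commute_ι_mul_ι_ι a b a).eq, ← mul_assoc, ι_sq_zero, zero_mul, zero_mul]

theorem ι_mul_ι_add_mul_sub (a b c e : M) :
    (ι R a * ι R b + ι R c * ι R e) * (ι R a * ι R b - ι R c * ι R e) = 0 := by
  have h := (commute_ι_mul_ι_ι (R := R) a b c).mul_right (commute_ι_mul_ι_ι a b e)
  rw [← h.mul_self_sub_mul_self_eq, ι_mul_ι_mul_self, ι_mul_ι_mul_self, sub_zero]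

theorem map_ι_mul_ι_mul {d : ExteriorAlgebra R M →ₗ[R] ExteriorAlgebra R M}
    (hleib : ∀ x y, d (ι R x * y) = d (ι R x) * y - ι R x * d y)
    (a b : M) (y : ExteriorAlgebra R M) :
    d (ι R a * ι R b * y) = d (ι R a * ι R b) * y + ι R a * ι R b * d y := by
  rw [mul_assoc, hleib, hleib, hleib]
  noncomm_ring

end ExteriorAlgebra

open ExteriorAlgebra in
/-- On the 6-dimensional Lie algebra with `de¹ = dJe¹ = de² = dJe² = de³ = 0`
and `d(Je³) = e¹∧Je¹ - e²∧Je²`, the fundamental form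
`F = e¹∧Je¹ + e²∧Je² + e³∧Je³` satisfies `d(F∧F) = 0`: the invariant
Hermitian metric is balanced. -/
theorem stmt_13
    (d : ExteriorAlgebra ℝ (Fin 6 → ℝ) →ₗ[ℝ] ExteriorAlgebra ℝ (Fin 6 → ℝ))
    (ε : Fin 6 → ExteriorAlgebra ℝ (Fin 6 → ℝ))
    (hε : ∀ i, ε i = ExteriorAlgebra.ι ℝ (Pi.single i 1))
    (hd0 : d (ε 0) = 0) (hd1 : d (ε 1) = 0) (hd2 : d (ε 2) = 0)
    (hd3 : d (ε 3) = 0) (hd4 : d (ε 4) = 0)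
    (hd5 : d (ε 5) = ε 0 * ε 1 - ε 2 * ε 3)
    (hleib : ∀ (x : Fin 6 → ℝ) (y : ExteriorAlgebra ℝ (Fin 6 → ℝ)),
      d (ExteriorAlgebra.ι ℝ x * y)
        = d (ExteriorAlgebra.ι ℝ x) * y - ExteriorAlgebra.ι ℝ x * d y) :
    let F := ε 0 * ε 1 + ε 2 * ε 3 + ε 4 * ε 5
    d (F * F) = 0 := by
  intro F
  have hd_pair_mul (i j : Fin 6) (y) :
      d (ε i * ε j * y) = d (ε i * ε j) * y + ε i * ε j * d y := by
    simp only [hε]; exact map_ι_mul_ι_mul hleib _ _ y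
  have hd_pair (i j : Fin 6) : d (ε i * ε j) = d (ε i) * ε j - ε i * d (ε j) := by
    rw [hε i]; exact hleib _ _
  have hF_comm (k : Fin 6) : Commute F (ε k) := by
    simp only [F, hε]
    exact ((commute_ι_mul_ι_ι _ _ _).add_left (commute_ι_mul_ι_ι _ _ _)).add_left
      (commute_ι_mul_ι_ι _ _ _)
  have hdF : d F = -(ε 4 * (ε 0 * ε 1 - ε 2 * ε 3)) := by
    simp only [F, map_add, hd_pair, hd0, hd1, hd2, hd3, hd4, hd5]
    noncomm_ring
  have hF_dF : F * d F = 0 := by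
    have h4F : ε 4 * F = ε 4 * (ε 0 * ε 1 + ε 2 * ε 3) := by
      have h44 : ε 4 * ε 4 = 0 := by rw [hε]; exact ι_sq_zero _
      simp only [F, mul_add, ← mul_assoc, h44, zero_mul, add_zero]
    calc F * d F = -(ε 4 * F * (ε 0 * ε 1 - ε 2 * ε 3)) := by
          rw [hdF, mul_neg, ← mul_assoc, (hF_comm 4).eq]
      _ = -(ε 4 * ((ε 0 * ε 1 + ε 2 * ε 3) * (ε 0 * ε 1 - ε 2 * ε 3))) := by
          rw [h4F, mul_assoc]
      _ = 0 := by simp only [hε, ι_mul_ι_add_mul_sub, mul_zero, neg_zero]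
  have hF_comm_dF : Commute F (d F) := by
    rw [hdF]
    exact ((hF_comm 4).mul_right (((hF_comm 0).mul_right (hF_comm 1)).sub_right
      ((hF_comm 2).mul_right (hF_comm 3)))).neg_right
  have hdFF : d (F * F) = d F * F + F * d F := by
    simp only [F, add_mul, map_add, hd_pair_mul]
    noncomm_ring
  rw [hdFF, ← hF_comm_dF.eq, hF_dF, add_zero]
end

section
/- In the Lie algebra of the previous context, the complex 3-form Ω = (e¹ + i Je¹) ∧ (e² + i Je²) ∧ (e³ + i Je³) is closed: dΩ = 0. -/
/-!
Write `θ₁ = e¹ + i Je¹`, `θ₂ = e² + i Je²`, `θ₃ = e³ + i Je³`, so `Ω = θ₁ ∧ θ₂ ∧ θ₃` with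
`dθ₁ = dθ₂ = 0`; by the Leibniz rule `dΩ = θ₁ ∧ θ₂ ∧ dθ₃ = i θ₁ ∧ θ₂ ∧ (e¹ ∧ Je¹ - e² ∧ Je²)`.
Both terms vanish: `θ₁` lies in the span of `e¹, Je¹`, so `θ₁ ∧ e¹ ∧ Je¹ = 0`, and likewise
`θ₂ ∧ e² ∧ Je² = 0`; the 2-form `e¹ ∧ Je¹` commutes with `θ₂`.
-/

namespace ExteriorAlgebra

variable {R M : Type*} [CommRing R] [AddCommGroup M] [Module R M]

lemma ι_mul_ι_eq_neg (x y : M) : ι R x * ι R y = -(ι R y * ι R x) :=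
  eq_neg_of_add_eq_zero_left (ι_add_mul_swap x y)

lemma commute_ι_ι_mul_ι (x y z : M) : Commute (ι R z) (ι R x * ι R y) := by
  rw [Commute, SemiconjBy, ← mul_assoc, ι_mul_ι_eq_neg z x, neg_mul, mul_assoc,
    ι_mul_ι_eq_neg z y, mul_neg, neg_neg, ← mul_assoc]

lemma ι_add_smul_mul_ι_mul_ι (x y : M) (c : R) :
    ι R (x + c • y) * (ι R x * ι R y) = 0 := by
  rw [map_add, map_smul, add_mul, ← mul_assoc, ι_sq_zero, zero_mul, zero_add,
    smul_mul_assoc, ← mul_assoc, ι_mul_ι_eq_neg y x, neg_mul, mul_assoc, ι_sq_zero,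
    mul_zero, neg_zero, smul_zero]

lemma map_ι_mul_ι_mul_of_map_ι_eq_zero (d : ExteriorAlgebra R M →ₗ[R] ExteriorAlgebra R M)
    (hleib : ∀ (x : M) (y : ExteriorAlgebra R M), d (ι R x * y) = d (ι R x) * y - ι R x * d y)
    {x y : M} (hx : d (ι R x) = 0) (hy : d (ι R y) = 0) (w : ExteriorAlgebra R M) :
    d (ι R x * (ι R y * w)) = ι R x * ι R y * d w := by
  rw [hleib, hx, hleib, hy, zero_mul, zero_sub, zero_mul, zero_sub, mul_neg, neg_neg, mul_assoc]

end ExteriorAlgebra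

open ExteriorAlgebra

/-- On the (complexified) 6-dimensional Lie algebra with
`de¹ = dJe¹ = de² = dJe² = de³ = 0` and `d(Je³) = e¹∧Je¹ - e²∧Je²`, the
complex 3-form `Ω = (e¹ + i Je¹)∧(e² + i Je²)∧(e³ + i Je³)` is closed. -/
theorem stmt_14
    (d : ExteriorAlgebra ℂ (Fin 6 → ℂ) →ₗ[ℂ] ExteriorAlgebra ℂ (Fin 6 → ℂ))
    (ε : Fin 6 → ExteriorAlgebra ℂ (Fin 6 → ℂ))
    (hε : ∀ i, ε i = ExteriorAlgebra.ι ℂ (Pi.single i 1))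
    (hd0 : d (ε 0) = 0) (hd1 : d (ε 1) = 0) (hd2 : d (ε 2) = 0)
    (hd3 : d (ε 3) = 0) (hd4 : d (ε 4) = 0)
    (hd5 : d (ε 5) = ε 0 * ε 1 - ε 2 * ε 3)
    (hleib : ∀ (x : Fin 6 → ℂ) (y : ExteriorAlgebra ℂ (Fin 6 → ℂ)),
      d (ExteriorAlgebra.ι ℂ x * y)
        = d (ExteriorAlgebra.ι ℂ x) * y - ExteriorAlgebra.ι ℂ x * d y) :
    let Ω := (ε 0 + Complex.I • ε 1) * (ε 2 + Complex.I • ε 3) * (ε 4 + Complex.I • ε 5)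
    d Ω = 0 := by
  intro Ω
  set e : Fin 6 → Fin 6 → ℂ := fun i => Pi.single i 1
  have hθ : ∀ j k, ε j + Complex.I • ε k = ι ℂ (e j + Complex.I • e k) := by
    intro j k
    rw [hε, hε, map_add, map_smul]
  have hdθ₁ : d (ι ℂ (e 0 + Complex.I • e 1)) = 0 := by
    rw [← hθ, map_add, map_smul, hd0, hd1, smul_zero, add_zero]
  have hdθ₂ : d (ι ℂ (e 2 + Complex.I • e 3)) = 0 := by
    rw [← hθ, map_add, map_smul, hd2, hd3, smul_zero, add_zero]
  have hdθ₃ : d (ι ℂ (e 4 + Complex.I • e 5)) = Complex.I • (ε 0 * ε 1 - ε 2 * ε 3) := by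
    rw [← hθ, map_add, map_smul, hd4, hd5, zero_add]
  have h01 : ι ℂ (e 0 + Complex.I • e 1) * ι ℂ (e 2 + Complex.I • e 3) * (ε 0 * ε 1) = 0 := by
    rw [hε, hε, mul_assoc, (commute_ι_ι_mul_ι _ _ _).eq, ← mul_assoc,
      ι_add_smul_mul_ι_mul_ι, zero_mul]
  have h23 : ι ℂ (e 0 + Complex.I • e 1) * ι ℂ (e 2 + Complex.I • e 3) * (ε 2 * ε 3) = 0 := by
    rw [hε, hε, mul_assoc, ι_add_smul_mul_ι_mul_ι, mul_zero]
  simp only [Ω, hθ, mul_assoc]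
  rw [map_ι_mul_ι_mul_of_map_ι_eq_zero d hleib hdθ₁ hdθ₂, hdθ₃, mul_smul_comm, mul_sub,
    h01, h23, sub_zero, smul_zero]
end
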